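/- arXiv:1803.06257 — 4 statements merged into one kernel-verified Lean document; each statement's English description precedes it below -/
import Mathlib

section
/- Let n ∈ ℕ and let c : Finset (Fin n) → ℕ be a circle-count function (for every s and i ∉ s, c(insert i s) = c(s) + 1 or c(s) = c(insert i s) + 1). If a finset v ⊆ Fin n satisfies c(v) = c(∅) + v.card, then every finset u ⊆ v satisfies c(u) = c(∅) + u.card. (Abstract form of Proposition 2.2: if v lies in S_min, then so does every state u < v.) -/
/-!
Changing one label raises the circle count by at most one, so `c (s ∪ d) ≤ c s + #d`.
For `u ⊆ v` this gives `c u ≤ c ∅ + #u` and `c v ≤ c u + #(v \ u)`; if `c v = c ∅ + #v`,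
both inequalities are forced to be equalities.
-/

/-- A circle-count function: changing one crossing label either splits one
circle into two or merges two circles into one. -/
def IsCircleCount (n : ℕ) (c : Finset (Fin n) → ℕ) : Prop :=
  ∀ s : Finset (Fin n), ∀ i ∉ s,
    c (insert i s) = c s + 1 ∨ c s = c (insert i s) + 1

open Finset

namespace IsCircleCount

variable {n : ℕ} {c : Finset (Fin n) → ℕ}

theorem apply_insert_le (hc : IsCircleCount n c) (s : Finset (Fin n)) (i : Fin n) :
    c (insert i s) ≤ c s + 1 := by
  by_cases hi : i ∈ s
  · rw [insert_eq_of_mem hi]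
    omega
  · rcases hc s i hi with h | h <;> omega

theorem apply_union_le (hc : IsCircleCount n c) (s d : Finset (Fin n)) :
    c (s ∪ d) ≤ c s + #d := by
  induction d using Finset.induction_on with
  | empty => simp
  | insert i d hid ih =>
    calc c (s ∪ insert i d) = c (insert i (s ∪ d)) := by rw [union_insert]
      _ ≤ c (s ∪ d) + 1 := hc.apply_insert_le _ i
      _ ≤ c s + #(insert i d) := by rw [card_insert_of_notMem hid]; omega

theorem apply_le_add_card_sdiff (hc : IsCircleCount n c) {s t : Finset (Fin n)} (hst : s ⊆ t) :
    c t ≤ c s + #(t \ s) := by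
  simpa [union_sdiff_of_subset hst] using hc.apply_union_le s (t \ s)

end IsCircleCount

theorem extremal_state_lower (n : ℕ) (c : Finset (Fin n) → ℕ)
    (hc : IsCircleCount n c) (v : Finset (Fin n))
    (hv : c v = c ∅ + v.card) :
    ∀ u : Finset (Fin n), u ⊆ v → c u = c ∅ + u.card := by
  intro u huv
  have hu : c u ≤ c ∅ + #u := by simpa using hc.apply_union_le ∅ u
  have hvu : c v ≤ c u + #(v \ u) := hc.apply_le_add_card_sdiff huv
  have hcard : #(v \ u) + #u = #v := card_sdiff_add_card_eq_card huv
  omega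
end

section
/- Let n ∈ ℕ and let c : Finset (Fin n) → ℕ be a circle-count function (for every s and i ∉ s, c(insert i s) = c(s) + 1 or c(s) = c(insert i s) + 1). If v ⊆ Fin n satisfies c(v) = c(∅) + v.card, then for all finsets u ⊆ w ⊆ v one has c(w) = c(u) + (w.card − u.card); in particular, passing from u to w performs exactly w.card − u.card circle splittings. -/
theorem IsCircleCount.antitone_sub_card {n : ℕ} {c : Finset (Fin n) → ℕ}
    (hc : IsCircleCount n c) : Antitone fun s => (c s : ℤ) - s.card := by
  refine Finset.antitone_iff_forall_insert_le.2 fun s i hi => ?_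
  rw [Finset.card_insert_of_notMem hi]
  rcases hc s i hi with h | h <;> omega

theorem extremal_state_splittings (n : ℕ) (c : Finset (Fin n) → ℕ)
    (hc : IsCircleCount n c) (v : Finset (Fin n))
    (hv : c v = c ∅ + v.card) :
    ∀ u w : Finset (Fin n), u ⊆ w → w ⊆ v →
      c w = c u + (w.card - u.card) := by
  intro u w huw hwv
  have hanti := hc.antitone_sub_card
  have hu : (c u : ℤ) - u.card ≤ c ∅ := by simpa using hanti (Finset.empty_subset u)
  have huw' := hanti huw
  have hwv' := hanti hwv
  have hcard := Finset.card_le_card huw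
  simp only at huw' hwv'
  omega
end

section
/- Let n ∈ ℕ and let c : Finset (Fin n) → ℕ be a circle-count function (for every s and i ∉ s, c(insert i s) = c(s) + 1 or c(s) = c(insert i s) + 1). Then the collection S' = { v : Finset (Fin n) | c(v) = c(∅) + v.card } contains ∅ and is a lower set for the inclusion order on Finset (Fin n) (if v ∈ S' and u ⊆ v then u ∈ S'). In particular, its nonempty members form the faces of an abstract simplicial complex. -/
open Finset

theorem Finset.apply_union_le_add_card {α : Type*} [DecidableEq α] {c : Finset α → ℕ}
    (hc : ∀ i s, c (insert i s) ≤ c s + 1) (s t : Finset α) : c (t ∪ s) ≤ c s + #t := by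
  induction t using Finset.induction_on with
  | empty => simp
  | insert a t ha ih =>
    rw [insert_union, card_insert_of_notMem ha]
    have := hc a (t ∪ s)
    omega

theorem IsCircleCount.insert_le {n : ℕ} {c : Finset (Fin n) → ℕ} (hc : IsCircleCount n c)
    (i : Fin n) (s : Finset (Fin n)) : c (insert i s) ≤ c s + 1 := by
  by_cases hi : i ∈ s
  · simp [insert_eq_of_mem hi]
  · rcases hc s i hi with h | h <;> omega

theorem IsCircleCount.le_add_card_sdiff {n : ℕ} {c : Finset (Fin n) → ℕ}
    (hc : IsCircleCount n c) {u v : Finset (Fin n)} (huv : u ⊆ v) :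
    c v ≤ c u + #(v \ u) := by
  simpa [sdiff_union_of_subset huv] using apply_union_le_add_card hc.insert_le u (v \ u)

theorem extremal_states_simplicial_complex (n : ℕ) (c : Finset (Fin n) → ℕ)
    (hc : IsCircleCount n c) :
    (∅ : Finset (Fin n)) ∈ {v : Finset (Fin n) | c v = c ∅ + v.card} ∧
      IsLowerSet {v : Finset (Fin n) | c v = c ∅ + v.card} := by
  refine ⟨by simp, fun v u huv (hv : c v = c ∅ + #v) => ?_⟩
  have hvu := hc.le_add_card_sdiff huv
  have hu := hc.le_add_card_sdiff (empty_subset u)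
  rw [card_sdiff_of_subset huv] at hvu
  rw [sdiff_empty] at hu
  have := card_le_card huv
  show c u = c ∅ + #u
  omega
end

section
/- Let n, n₊, n₋ ∈ ℕ and let c : Finset (Fin n) → ℕ be a circle-count function (for every s and i ∉ s, c(insert i s) = c(s) + 1 or c(s) = c(insert i s) + 1). Let v be a finset of Fin n and let x : Fin (c v) → ℤ satisfy x(i) ∈ {−1, 1} for all i. Then q(v,x) = n₊ − 2n₋ + v.card + Σᵢ x(i) equals the minimal value n₊ − 2n₋ − c(∅) if and only if c(v) = c(∅) + v.card and x(i) = −1 for all i. (Characterization of minimal enhanced states in Proposition 2.1: q(v,x) = j_min iff (v,x) ∈ S_min.) -/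
lemma IsCircleCount.le_add_card {n : ℕ} {c : Finset (Fin n) → ℕ} (hc : IsCircleCount n c)
    (v : Finset (Fin n)) : c v ≤ c ∅ + v.card := by
  induction v using Finset.induction_on with
  | empty => simp
  | @insert i s hi ih =>
    rw [Finset.card_insert_of_notMem hi]
    rcases hc s i hi with h | h <;> omega

section SumNegOne

variable {ι : Type*} [Fintype ι] {x : ι → ℤ}

lemma neg_card_le_sum_of_neg_one_le (hx : ∀ i, -1 ≤ x i) : -(Fintype.card ι : ℤ) ≤ ∑ i, x i := by
  simpa using Finset.sum_le_sum fun i (_ : i ∈ Finset.univ) => hx i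

lemma sum_eq_neg_card_iff_of_neg_one_le (hx : ∀ i, -1 ≤ x i) :
    ∑ i, x i = -(Fintype.card ι : ℤ) ↔ ∀ i, x i = -1 := by
  have hshift : ∑ i, (x i + 1) = ∑ i, x i + Fintype.card ι := by
    simp [Finset.sum_add_distrib]
  rw [← add_eq_zero_iff_eq_neg, ← hshift,
    Finset.sum_eq_zero_iff_of_nonneg fun i _ => by linarith [hx i]]
  simp [add_eq_zero_iff_eq_neg]

end SumNegOne

theorem q_eq_jmin_iff (n nplus nminus : ℕ) (c : Finset (Fin n) → ℕ)
    (hc : IsCircleCount n c) (v : Finset (Fin n)) (x : Fin (c v) → ℤ)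
    (hx : ∀ i, x i = -1 ∨ x i = 1) :
    (nplus : ℤ) - 2 * (nminus : ℤ) + (v.card : ℤ) + ∑ i, x i =
        (nplus : ℤ) - 2 * (nminus : ℤ) - (c ∅ : ℤ) ↔
      (c v = c ∅ + v.card ∧ ∀ i, x i = -1) := by
  have hx' : ∀ i, -1 ≤ x i := fun i => by rcases hx i with h | h <;> omega
  have hcircles := hc.le_add_card v
  have hsum := neg_card_le_sum_of_neg_one_le hx'
  rw [Fintype.card_fin] at hsum
  rw [← sum_eq_neg_card_iff_of_neg_one_le hx', Fintype.card_fin]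
  omega
end
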